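/- Let F be an R-subalgebra of g(S) such that every element of g(S) can be written uniquely in the form Σ_{i=0}^{m-1} z^i y_i with y_0, …, y_{m-1} ∈ F. Then the S-linear map S ⊗_R F → g(S) determined by s ⊗ y ↦ s·y is an isomorphism of Lie algebras over S; that is, F is an S/R form of g(R). -/

import Mathlib

open scoped TensorProduct
open LaurentPolynomial

set_option maxHeartbeats 1000000
set_option synthInstance.maxHeartbeats 400000

noncomputable section

namespace LoopPaper

variable {k : Type*} [Field k] {g : Type*} [LieRing g] [LieAlgebra k g]

/-- A linear automorphism of a Lie algebra is a Lie algebra automorphism if it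
preserves brackets. -/
def IsLieAut (σ : g ≃ₗ[k] g) : Prop := ∀ x y : g, σ ⁅x, y⁆ = ⁅σ x, σ y⁆

theorem IsLieAut.one : IsLieAut (1 : g ≃ₗ[k] g) := fun _ _ => rfl

theorem IsLieAut.mul {σ τ : g ≃ₗ[k] g} (hσ : IsLieAut σ) (hτ : IsLieAut τ) :
    IsLieAut (σ * τ) := fun x y => by
  show σ (τ ⁅x, y⁆) = ⁅σ (τ x), σ (τ y)⁆
  rw [hτ, hσ]

theorem IsLieAut.inv {σ : g ≃ₗ[k] g} (hσ : IsLieAut σ) : IsLieAut σ⁻¹ := fun x y => by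
  apply σ.injective
  have h1 : ∀ z, σ (σ⁻¹ z) = z := fun z => σ.apply_symm_apply z
  rw [h1, hσ, h1, h1]

/-! ### The variable-scaling automorphism `z ↦ c z` of `k[z,z⁻¹]` -/

/-- The unit `c^n • z^n` of the Laurent polynomial ring. -/
def scaleUnit (c : kˣ) (n : ℤ) : (LaurentPolynomial k)ˣ where
  val := ((c ^ n : kˣ) : k) • T n
  inv := ((c ^ (-n) : kˣ) : k) • T (-n)
  val_inv := by
    rw [smul_mul_smul_comm, ← T_add, ← Units.val_mul, ← zpow_add, add_neg_cancel, zpow_zero,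
      Units.val_one, T_zero, one_smul]
  inv_val := by
    rw [smul_mul_smul_comm, ← T_add, ← Units.val_mul, ← zpow_add, neg_add_cancel, zpow_zero,
      Units.val_one, T_zero, one_smul]

/-- The homomorphism `n ↦ c^n • z^n` from `ℤ` to the units of `k[z,z⁻¹]`. -/
def scaleUnitHom (c : kˣ) : Multiplicative ℤ →* (LaurentPolynomial k)ˣ where
  toFun n := scaleUnit c n.toAdd
  map_one' := Units.ext (by
    show ((c ^ (0 : ℤ) : kˣ) : k) • T (0 : ℤ) = 1
    rw [zpow_zero, Units.val_one, T_zero, one_smul])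
  map_mul' a b := Units.ext (by
    show ((c ^ (a.toAdd + b.toAdd) : kˣ) : k) • T (a.toAdd + b.toAdd) =
      (((c ^ a.toAdd : kˣ) : k) • T a.toAdd) * (((c ^ b.toAdd : kˣ) : k) • T b.toAdd)
    rw [smul_mul_smul_comm, ← T_add, ← Units.val_mul, ← zpow_add])

/-- The `k`-algebra endomorphism of `k[z,z⁻¹]` with `z ↦ c z`. -/
def scaleVar (c : kˣ) : LaurentPolynomial k →ₐ[k] LaurentPolynomial k :=
  AddMonoidAlgebra.lift (R := k) (M := ℤ) (A := _) ((Units.coeHom _).comp (scaleUnitHom c))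

theorem scaleVar_T (c : kˣ) (n : ℤ) : scaleVar c (T n) = ((c ^ n : kˣ) : k) • T n := by
  have h : (T n : LaurentPolynomial k) = AddMonoidAlgebra.of k ℤ (Multiplicative.ofAdd n) := rfl
  rw [h, scaleVar, AddMonoidAlgebra.lift_of]
  rfl

theorem scaleVar_comp (c d : kˣ) :
    (scaleVar c).comp (scaleVar d) = scaleVar (k := k) (c * d) := by
  refine AddMonoidAlgebra.algHom_ext ?_ (Subsingleton.elim _ _)
  intro n
  have hT : (AddMonoidAlgebra.single n 1 : LaurentPolynomial k) = T n := rfl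
  simp only [AlgHom.coe_comp, Function.comp_apply, hT]
  rw [scaleVar_T, map_smul, scaleVar_T, smul_smul, scaleVar_T]
  congr 1
  rw [mul_zpow, Units.val_mul, mul_comm]

theorem scaleVar_id : scaleVar (1 : kˣ) = AlgHom.id k (LaurentPolynomial k) := by
  refine AddMonoidAlgebra.algHom_ext ?_ (Subsingleton.elim _ _)
  intro n
  have hT : (AddMonoidAlgebra.single n 1 : LaurentPolynomial k) = T n := rfl
  simp only [hT, AlgHom.coe_id, id_eq]
  rw [scaleVar_T, one_zpow, Units.val_one, one_smul]

/-- The `k`-algebra automorphism of `k[z,z⁻¹]` with `z ↦ c z`. -/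
def scaleVarEquiv (c : kˣ) : LaurentPolynomial k ≃ₐ[k] LaurentPolynomial k :=
  AlgEquiv.ofAlgHom (scaleVar c) (scaleVar c⁻¹)
    (by rw [scaleVar_comp, mul_inv_cancel, scaleVar_id])
    (by rw [scaleVar_comp, inv_mul_cancel, scaleVar_id])

theorem scaleVarEquiv_apply (c : kˣ) (p : LaurentPolynomial k) :
    scaleVarEquiv c p = scaleVar c p := rfl


/-- `R = k[t,t⁻¹]`, identified with the `k`-subalgebra of `S = k[z,z⁻¹]` generated by
`t = z^m` and `t⁻¹ = z^{-m}`. -/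
def Rsub (k : Type*) [Field k] (m : ℕ) : Subalgebra k (LaurentPolynomial k) :=
  Algebra.adjoin k {T (m : ℤ), T (-(m : ℤ))}

/-- `g(S) = g ⊗_k S` is a Lie algebra over `k` (by restriction from `S`). -/
instance instLieAlgebraTensorBase : LieAlgebra k (LaurentPolynomial k ⊗[k] g) where
  lie_smul c x y := by
    have h := lie_smul (algebraMap k (LaurentPolynomial k) c) x y
    rwa [algebraMap_smul, algebraMap_smul] at h

/-- The underlying submodule `⊕_{i ∈ ℤ} g_ī ⊗ z^i` of the loop algebra. -/
def loopCarrier (ζ : k) (σ : g ≃ₗ[k] g) : Submodule k (LaurentPolynomial k ⊗[k] g) :=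
  Submodule.span k {p | ∃ (i : ℤ) (x : g), σ x = ζ ^ i • x ∧ p = T i ⊗ₜ[k] x}

theorem loop_lie_mem {ζ : k} (hζ0 : ζ ≠ 0) {σ : g ≃ₗ[k] g} (hbr : IsLieAut σ)
    {x y : LaurentPolynomial k ⊗[k] g} (hx : x ∈ loopCarrier ζ σ) (hy : y ∈ loopCarrier ζ σ) :
    ⁅x, y⁆ ∈ loopCarrier ζ σ := by
  have key : ∀ p ∈ {p : LaurentPolynomial k ⊗[k] g |
      ∃ (i : ℤ) (x : g), σ x = ζ ^ i • x ∧ p = T i ⊗ₜ[k] x},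
      ∀ q, q ∈ loopCarrier ζ σ → ⁅p, q⁆ ∈ loopCarrier ζ σ := by
    rintro p ⟨i, a, ha, rfl⟩ q hq
    unfold loopCarrier at hq ⊢
    induction hq using Submodule.span_induction with
    | mem q hq =>
      obtain ⟨j, b, hb, rfl⟩ := hq
      rw [LieAlgebra.ExtendScalars.bracket_tmul, ← T_add]
      refine Submodule.subset_span ⟨i + j, ⁅a, b⁆, ?_, rfl⟩
      rw [hbr, ha, hb, smul_lie, lie_smul, smul_smul, ← zpow_add₀ hζ0]
    | zero =>
      have h0 : ⁅(T i ⊗ₜ[k] a : LaurentPolynomial k ⊗[k] g), (0 : LaurentPolynomial k ⊗[k] g)⁆ = 0 :=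
        lie_zero (T i ⊗ₜ[k] a : LaurentPolynomial k ⊗[k] g)
      rw [h0]; exact zero_mem _
    | add q r _ _ hq hr =>
      have h0 : ⁅(T i ⊗ₜ[k] a : LaurentPolynomial k ⊗[k] g), q + r⁆ = ⁅T i ⊗ₜ[k] a, q⁆ + ⁅T i ⊗ₜ[k] a, r⁆ :=
        lie_add (T i ⊗ₜ[k] a : LaurentPolynomial k ⊗[k] g) q r
      rw [h0]; exact add_mem hq hr
    | smul c q _ hq =>
      have h0 : ⁅(T i ⊗ₜ[k] a : LaurentPolynomial k ⊗[k] g), c • q⁆ = c • ⁅T i ⊗ₜ[k] a, q⁆ :=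
        lie_smul c (T i ⊗ₜ[k] a : LaurentPolynomial k ⊗[k] g) q
      rw [h0]; exact Submodule.smul_mem _ _ hq
  unfold loopCarrier at hx
  induction hx using Submodule.span_induction with
  | mem p hp => exact key p hp y hy
  | zero =>
    have h0 : ⁅(0 : LaurentPolynomial k ⊗[k] g), y⁆ = 0 := zero_lie y
    rw [h0]; exact zero_mem _
  | add p r _ _ hp hr =>
    have h0 : ⁅p + r, y⁆ = ⁅p, y⁆ + ⁅r, y⁆ := add_lie p r y
    rw [h0]; exact add_mem hp hr
  | smul c p _ hp =>
    have h0 : ⁅c • p, y⁆ = c • ⁅p, y⁆ := smul_lie c p y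
    rw [h0]; exact Submodule.smul_mem _ _ hp

/-- The loop algebra `L(g,σ) = ⊕_{i ∈ ℤ} g_ī ⊗ z^i`, a Lie subalgebra (over `k`)
of `g(S) = g ⊗_k S`.  Here `m` is a period of `σ` and `ζ` is the chosen root of unity. -/
def loopAlgebra (m : ℕ) (ζ : k) (hζ0 : ζ ≠ 0) (hζm : ζ ^ m = 1) (σ : g ≃ₗ[k] g)
    (hbr : IsLieAut σ) (hσ : σ ^ m = 1) : LieSubalgebra k (LaurentPolynomial k ⊗[k] g) where
  __ := loopCarrier ζ σ
  lie_mem' := fun hx hy => loop_lie_mem hζ0 hbr hx hy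

theorem mem_loopAlgebra_iff {m : ℕ} {ζ : k} {hζ0 : ζ ≠ 0} {hζm : ζ ^ m = 1} {σ : g ≃ₗ[k] g}
    {hbr : IsLieAut σ} {hσ : σ ^ m = 1} {x : LaurentPolynomial k ⊗[k] g} :
    x ∈ loopAlgebra m ζ hζ0 hζm σ hbr hσ ↔ x ∈ loopCarrier ζ σ := Iff.rfl

theorem T_smul_loop {ζ : k} (hζ0 : ζ ≠ 0) {σ : g ≃ₗ[k] g} {j : ℤ} (hj : ζ ^ j = 1)
    {x : LaurentPolynomial k ⊗[k] g} (hx : x ∈ loopCarrier ζ σ) :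
    (T j : LaurentPolynomial k) • x ∈ loopCarrier ζ σ := by
  unfold loopCarrier at hx ⊢
  induction hx using Submodule.span_induction with
  | mem p hp =>
    obtain ⟨i, a, ha, rfl⟩ := hp
    rw [TensorProduct.smul_tmul', smul_eq_mul, ← T_add]
    refine Submodule.subset_span ⟨j + i, a, ?_, rfl⟩
    rw [ha, zpow_add₀ hζ0, hj, one_mul]
  | zero => rw [smul_zero]; exact zero_mem _
  | add p q _ _ hp hq => rw [smul_add]; exact add_mem hp hq
  | smul c p _ hp =>
    rw [smul_comm]
    exact Submodule.smul_mem _ _ hp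

theorem Rsub_smul_loop {m : ℕ} {ζ : k} (hζ0 : ζ ≠ 0) (hζm : ζ ^ m = 1) {σ : g ≃ₗ[k] g}
    {r : LaurentPolynomial k} (hr : r ∈ Rsub k m) :
    ∀ x ∈ loopCarrier ζ σ, r • x ∈ loopCarrier (g := g) ζ σ := by
  induction hr using Algebra.adjoin_induction with
  | mem s hs =>
    intro x hx
    rcases hs with rfl | rfl
    · refine T_smul_loop hζ0 ?_ hx
      rw [zpow_natCast, hζm]
    · refine T_smul_loop hζ0 ?_ hx
      rw [zpow_neg, zpow_natCast, hζm, inv_one]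
  | algebraMap c =>
    intro x hx
    rw [algebraMap_smul]
    exact Submodule.smul_mem _ _ hx
  | add r s _ _ hr hs =>
    intro x hx
    rw [add_smul]
    exact add_mem (hr x hx) (hs x hx)
  | mul r s _ _ hr hs =>
    intro x hx
    rw [mul_smul]
    exact hr _ (hs x hx)


/-- The action of `R` on the loop algebra. -/
instance loopSMulR {m : ℕ} {ζ : k} {hζ0 : ζ ≠ 0} {hζm : ζ ^ m = 1} {σ : g ≃ₗ[k] g}
    {hbr : IsLieAut σ} {hσ : σ ^ m = 1} :
    SMul ↥(Rsub k m) ↥(loopAlgebra m ζ hζ0 hζm σ hbr hσ) where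
  smul r x := ⟨(r : LaurentPolynomial k) • (x : LaurentPolynomial k ⊗[k] g),
    Rsub_smul_loop hζ0 hζm r.2 _ x.2⟩

theorem loop_smul_coe {m : ℕ} {ζ : k} {hζ0 : ζ ≠ 0} {hζm : ζ ^ m = 1} {σ : g ≃ₗ[k] g}
    {hbr : IsLieAut σ} {hσ : σ ^ m = 1} (r : ↥(Rsub k m))
    (x : ↥(loopAlgebra m ζ hζ0 hζm σ hbr hσ)) :
    ((r • x : ↥(loopAlgebra m ζ hζ0 hζm σ hbr hσ)) : LaurentPolynomial k ⊗[k] g)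
      = (r : LaurentPolynomial k) • (x : LaurentPolynomial k ⊗[k] g) := rfl

/-- The loop algebra is a module over `R = k[t,t⁻¹] ⊆ k[z,z⁻¹]`. -/
instance loopModuleR {m : ℕ} {ζ : k} {hζ0 : ζ ≠ 0} {hζm : ζ ^ m = 1} {σ : g ≃ₗ[k] g}
    {hbr : IsLieAut σ} {hσ : σ ^ m = 1} :
    Module ↥(Rsub k m) ↥(loopAlgebra m ζ hζ0 hζm σ hbr hσ) where
  one_smul x := Subtype.ext (by simp [loop_smul_coe])
  mul_smul r s x := Subtype.ext (by simp [loop_smul_coe, mul_smul])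
  smul_zero r := Subtype.ext (by simp [loop_smul_coe])
  smul_add r x y := Subtype.ext (by simp [loop_smul_coe, smul_add])
  add_smul r s x := Subtype.ext (by simp [loop_smul_coe, add_smul])
  zero_smul x := Subtype.ext (by simp [loop_smul_coe])


/-- The inclusion of the loop algebra in `g(S)`, as an `R`-linear map. -/
def loopIncl (m : ℕ) (ζ : k) (hζ0 : ζ ≠ 0) (hζm : ζ ^ m = 1) (σ : g ≃ₗ[k] g)
    (hbr : IsLieAut σ) (hσ : σ ^ m = 1) :
    ↥(loopAlgebra m ζ hζ0 hζm σ hbr hσ) →ₗ[↥(Rsub k m)] (LaurentPolynomial k ⊗[k] g) where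
  toFun x := ↑x
  map_add' _ _ := rfl
  map_smul' _ _ := rfl

/-- The eigenspace `{x ∈ g : σ(x) = c x}`. -/
def eigSpace (σ : g ≃ₗ[k] g) (c : k) : Submodule k g where
  carrier := {x | σ x = c • x}
  add_mem' := by
    intro x y hx hy
    show σ (x + y) = c • (x + y)
    rw [map_add, hx, hy, smul_add]
  zero_mem' := by
    show σ 0 = c • (0 : g)
    rw [map_zero, smul_zero]
  smul_mem' := by
    intro t x hx
    show σ (t • x) = c • t • x
    rw [map_smul, hx, smul_comm]

/-- The `R`-algebra automorphism `id ⊗ ι_i` of `g(S)`, where `ι_i(z) = ζ^i z`. -/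
def idTensorIota (ζ : k) (hζ0 : ζ ≠ 0) (i : ℤ) :
    (LaurentPolynomial k ⊗[k] g) ≃ₗ[k] (LaurentPolynomial k ⊗[k] g) :=
  TensorProduct.congr (scaleVarEquiv (Units.mk0 ζ hζ0 ^ i)).toLinearEquiv (LinearEquiv.refl k g)

/-- A `k`-linear automorphism of `g(S)` lies in `Aut_S(g(S))` if it is `S`-linear and
preserves brackets. -/
def IsSAut (f : (LaurentPolynomial k ⊗[k] g) ≃ₗ[k] (LaurentPolynomial k ⊗[k] g)) : Prop :=
  (∀ (s : LaurentPolynomial k) (x : LaurentPolynomial k ⊗[k] g), f (s • x) = s • f x) ∧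
    ∀ x y : LaurentPolynomial k ⊗[k] g, f ⁅x, y⁆ = ⁅f x, f y⁆

/-- The action of `ī ∈ Γ = ℤ/mℤ` on `Aut_S(g(S))`:  `ⁱτ = (id ⊗ ι_i) ∘ τ ∘ (id ⊗ ι_i)⁻¹`. -/
def gammaAct (ζ : k) (hζ0 : ζ ≠ 0) (i : ℤ)
    (τ : (LaurentPolynomial k ⊗[k] g) ≃ₗ[k] (LaurentPolynomial k ⊗[k] g)) :
    (LaurentPolynomial k ⊗[k] g) ≃ₗ[k] (LaurentPolynomial k ⊗[k] g) :=
  ((idTensorIota (g := g) ζ hζ0 i).symm.trans τ).trans (idTensorIota ζ hζ0 i)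

/-- A family `u_ī`, `ī ∈ Γ = ℤ/mℤ` (presented as a function on integer representatives),
is a 1-cocycle on `Γ` in `Aut_S(g(S))` if each `u_i` is an `S`-algebra automorphism,
`u_i` depends only on `i` mod `m`, and `u_{i+j} = u_i ∘ ⁱ(u_j)`. -/
def IsCocycle (m : ℕ) (ζ : k) (hζ0 : ζ ≠ 0)
    (u : ℤ → ((LaurentPolynomial k ⊗[k] g) ≃ₗ[k] (LaurentPolynomial k ⊗[k] g))) : Prop :=
  (∀ i : ℤ, IsSAut (u i)) ∧ (∀ i j : ℤ, (i : ZMod m) = (j : ZMod m) → u i = u j) ∧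
    ∀ i j : ℤ, u (i + j) = (gammaAct ζ hζ0 i (u j)).trans (u i)

/-- The fixed point set `g(S)_u = {x : (u_ī ∘ (id ⊗ ι_i)) x = x for all ī}` of a 1-cocycle. -/
def cocycleFixed (ζ : k) (hζ0 : ζ ≠ 0)
    (u : ℤ → ((LaurentPolynomial k ⊗[k] g) ≃ₗ[k] (LaurentPolynomial k ⊗[k] g))) :
    Set (LaurentPolynomial k ⊗[k] g) :=
  {x | ∀ i : ℤ, u i (idTensorIota ζ hζ0 i x) = x}


/-! The monomials `z^i`, `0 ≤ i < m`, span `S` over `R` because `z^n = z^(n % m) t^(n / m)`.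
Hence every element of `S ⊗_R F` has the form `Σ z^i ⊗ y_i`, which the map sends to
`Σ z^i y_i`; existence and uniqueness of such expansions in `g(S)` are then exactly
surjectivity and injectivity. -/

open Submodule TensorProduct in
theorem _root_.TensorProduct.exists_eq_sum_tmul_of_span_eq_top {R A M ι : Type*} [CommSemiring R]
    [CommSemiring A] [Algebra R A] [AddCommMonoid M] [Module R M] [Fintype ι] {v : ι → A}
    (hv : span R (Set.range v) = ⊤) (w : A ⊗[R] M) :
    ∃ y : ι → M, w = ∑ i, v i ⊗ₜ y i := by
  induction w using TensorProduct.induction_on with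
  | zero => exact ⟨0, by simp⟩
  | tmul a x =>
    obtain ⟨c, rfl⟩ := (mem_span_range_iff_exists_fun R).1 (hv ▸ mem_top : a ∈ span R _)
    exact ⟨fun i => c i • x, by simp only [sum_tmul, smul_tmul]⟩
  | add w₁ w₂ h₁ h₂ =>
    obtain ⟨y₁, rfl⟩ := h₁
    obtain ⟨y₂, rfl⟩ := h₂
    exact ⟨y₁ + y₂, by simp only [Pi.add_apply, tmul_add, Finset.sum_add_distrib]⟩

theorem _root_.LinearMap.liftBaseChange_subtype_bijective {R A N ι : Type*} [CommRing R]
    [CommRing A] [Algebra R A] [AddCommGroup N] [Module R N] [Module A N] [IsScalarTower R A N]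
    [Fintype ι]
    {v : ι → A} (hv : Submodule.span R (Set.range v) = ⊤) (F : Submodule R N)
    (hrep : ∀ x : N, ∃! y : ι → N, (∀ i, y i ∈ F) ∧ x = ∑ i, v i • y i) :
    Function.Bijective (F.subtype.liftBaseChange A) := by
  have hsum (y : ι → F) :
      F.subtype.liftBaseChange A (∑ i, v i ⊗ₜ y i) = ∑ i, v i • (y i : N) := by
    simp only [map_sum, LinearMap.liftBaseChange_tmul, Submodule.subtype_apply]
  constructor
  · intro a b hab
    obtain ⟨ya, rfl⟩ := TensorProduct.exists_eq_sum_tmul_of_span_eq_top hv a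
    obtain ⟨yb, rfl⟩ := TensorProduct.exists_eq_sum_tmul_of_span_eq_top hv b
    rw [hsum, hsum] at hab
    have hy : (fun i => (ya i : N)) = fun i => (yb i : N) :=
      (hrep _).unique ⟨fun i => (ya i).2, rfl⟩ ⟨fun i => (yb i).2, hab⟩
    rw [show ya = yb from funext fun i => Subtype.ext (congrFun hy i)]
  · intro x
    obtain ⟨y, ⟨hy, rfl⟩, -⟩ := hrep x
    exact ⟨∑ i, v i ⊗ₜ ⟨y i, hy i⟩, hsum _⟩

theorem T_mul_mem_Rsub (m : ℕ) (q : ℤ) :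
    (T ((m : ℤ) * q) : LaurentPolynomial k) ∈ Rsub k m := by
  induction q using Int.induction_on with
  | zero => simpa only [mul_zero, T_zero] using one_mem _
  | succ n ih =>
    rw [mul_add_one, T_add]
    exact mul_mem ih (Algebra.subset_adjoin (Set.mem_insert _ _))
  | pred n ih =>
    rw [mul_sub_one, sub_eq_add_neg, T_add]
    exact mul_mem ih (Algebra.subset_adjoin (Set.mem_insert_of_mem _ rfl))

theorem span_range_T_eq_top {m : ℕ} (hm : 0 < m) :
    Submodule.span (Rsub k m) (Set.range fun i : Fin m => (T (i : ℤ) : LaurentPolynomial k)) =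
      ⊤ := by
  refine Submodule.eq_top_iff'.2 fun s => ?_
  induction s using LaurentPolynomial.induction_on' with
  | add p q hp hq => exact add_mem hp hq
  | C_mul_T n a =>
    have hi : ((n % m).toNat : ℤ) = n % m := Int.toNat_of_nonneg (Int.emod_nonneg n (by omega))
    have hlt : (n % m).toNat < m := by
      have := Int.emod_lt_of_pos n (by omega : (0 : ℤ) < m)
      omega
    have hr : C a * T (m * (n / m)) ∈ Rsub k m :=
      mul_mem ((Rsub k m).algebraMap_mem a) (T_mul_mem_Rsub m _)
    have hs : C a * T n = (⟨_, hr⟩ : Rsub k m) • T ((⟨_, hlt⟩ : Fin m) : ℤ) := by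
      rw [Subalgebra.smul_def, smul_eq_mul, Fin.val_mk, hi, mul_assoc, ← T_add,
        Int.mul_ediv_add_emod]
    rw [hs]
    exact Submodule.smul_mem _ _ (Submodule.subset_span ⟨_, rfl⟩)

theorem statement3_general {k : Type*} [Field k] {g : Type*} [LieRing g] [LieAlgebra k g]
    (m : ℕ) (hm : 0 < m)
    (F : Submodule ↥(Rsub k m) (LaurentPolynomial k ⊗[k] g))
    (hrep : ∀ x : LaurentPolynomial k ⊗[k] g,
      ∃! y : Fin m → LaurentPolynomial k ⊗[k] g,
        (∀ i, y i ∈ F) ∧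
          x = ∑ i : Fin m, ((T (i : ℤ) : LaurentPolynomial k) • y i)) :
    (∀ (s : LaurentPolynomial k) (y : ↥F),
      LinearMap.liftBaseChange (LaurentPolynomial k) F.subtype (s ⊗ₜ[↥(Rsub k m)] y)
        = s • (y : LaurentPolynomial k ⊗[k] g)) ∧
    Function.Bijective (LinearMap.liftBaseChange (LaurentPolynomial k) F.subtype) :=
  ⟨fun s y => LinearMap.liftBaseChange_tmul _ _ s y,
    LinearMap.liftBaseChange_subtype_bijective (span_range_T_eq_top hm) F hrep⟩

/-- If `F` is an `R`-subalgebra of `g(S)` such that every element of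
`g(S)` is uniquely of the form `Σ_{i=0}^{m-1} z^i y_i` with `y_i ∈ F`, then the
`S`-linear map `S ⊗_R F → g(S)`, `s ⊗ y ↦ s·y`, is an isomorphism of Lie algebras
over `S`; that is, `F` is an `S/R` form of `g(R)`. -/
theorem statement3 {k : Type*} [Field k] [CharZero k] {g : Type*} [LieRing g] [LieAlgebra k g]
    (m : ℕ) (hm : 0 < m)
    (F : Submodule ↥(Rsub k m) (LaurentPolynomial k ⊗[k] g))
    (hlie : ∀ x ∈ F, ∀ y ∈ F, ⁅x, y⁆ ∈ F)
    (hrep : ∀ x : LaurentPolynomial k ⊗[k] g,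
      ∃! y : Fin m → LaurentPolynomial k ⊗[k] g,
        (∀ i, y i ∈ F) ∧
          x = ∑ i : Fin m, ((T (i : ℤ) : LaurentPolynomial k) • y i)) :
    (∀ (s : LaurentPolynomial k) (y : ↥F),
      LinearMap.liftBaseChange (LaurentPolynomial k) F.subtype (s ⊗ₜ[↥(Rsub k m)] y)
        = s • (y : LaurentPolynomial k ⊗[k] g)) ∧
    Function.Bijective (LinearMap.liftBaseChange (LaurentPolynomial k) F.subtype) :=
  statement3_general m hm F hrep

end LoopPaper
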